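/- arXiv:1411.4339 — 2 statements merged into one kernel-verified Lean document; each statement's English description precedes it below -/
import Mathlib

section
/- Let X* ∈ F. Then X* satisfies the first-order optimality condition ⟨∇f(X*) | X − X*⟩ ≥ 0 for every X ∈ F if and only if N(X*) = 0, where N(X) := ⟨∇f(X) | D(X)⟩. -/
set_option autoImplicit false

open Matrix Set Filter

attribute [local instance] Matrix.normedAddCommGroup Matrix.normedSpace

namespace BoxSDP

open scoped Classical

/-- Trace inner product `⟨A|B⟩ = Trace(Aᵀ B)`. -/
noncomputable def mip {m k : Type*} [Fintype m] [Fintype k]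
    (A B : Matrix m k ℝ) : ℝ :=
  (Aᵀ * B).trace

/-- Frobenius norm `‖A‖_F = √⟨A|A⟩`. -/
noncomputable def fnorm {m k : Type*} [Fintype m] [Fintype k]
    (A : Matrix m k ℝ) : ℝ :=
  Real.sqrt (mip A A)

/-- The feasible set `F = {X : O ⪯ X ⪯ I}` (membership forces symmetry). -/
def Feas (n : ℕ) : Set (Matrix (Fin n) (Fin n) ℝ) :=
  {X | X.PosSemidef ∧ (1 - X).PosSemidef}

/-- Square root of a positive semidefinite matrix (junk value `0` otherwise);
agrees with `A^{1/2} = Q K^{1/2} Qᵀ` on positive semidefinite matrices. -/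
noncomputable def psqrt {m : Type*} [Fintype m] [DecidableEq m]
    (A : Matrix m m ℝ) : Matrix m m ℝ :=
  if h : A.PosSemidef then
    h.1.eigenvectorUnitary.1 * Matrix.diagonal ((↑) ∘ (√·) ∘ h.1.eigenvalues) *
      (star h.1.eigenvectorUnitary : Matrix m m ℝ)
  else 0

/-- Fourth root `A^{1/4}` of a positive semidefinite matrix. -/
noncomputable def proot4 {m : Type*} [Fintype m] [DecidableEq m]
    (A : Matrix m m ℝ) : Matrix m m ℝ :=
  psqrt (psqrt A)

/-- The 2-norm of a symmetric matrix: its largest absolute eigenvalue. -/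
noncomputable def norm2 {m : Type*} [Fintype m] [DecidableEq m]
    (A : Matrix m m ℝ) : ℝ :=
  if h : A.IsHermitian then sSup (Set.range fun i => |h.eigenvalues i|) else 0

/-- The linear functional `H ↦ ⟨G|H⟩`, as a continuous linear map; a function
`f` has gradient matrix `G` at `X` iff `HasFDerivAt f (gradCLM G) X`. -/
noncomputable def gradCLM {n : ℕ} (G : Matrix (Fin n) (Fin n) ℝ) :
    Matrix (Fin n) (Fin n) ℝ →L[ℝ] ℝ :=
  LinearMap.toContinuousLinearMap
    { toFun := fun H => mip G H
      map_add' := fun x y => by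
        simp [mip, Matrix.mul_add]
      map_smul' := fun c x => by
        simp [mip, Matrix.mul_smul] }

/-- The Hessian bilinear form `⟨A | ∇²f(X) | B⟩` induced by the derivative
`hessOp` of the gradient map. -/
noncomputable def hform {n : ℕ}
    (hessOp : Matrix (Fin n) (Fin n) ℝ →L[ℝ] Matrix (Fin n) (Fin n) ℝ)
    (A B : Matrix (Fin n) (Fin n) ℝ) : ℝ :=
  mip A (hessOp B)

/-- `underline-f`: the minimum of `⟨G | Y − X̂⟩` over `Y ∈ F`. -/
noncomputable def underf {n : ℕ} (G Xh : Matrix (Fin n) (Fin n) ℝ) : ℝ :=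
  sInf ((fun Y => mip G (Y - Xh)) '' Feas n)

/-- First-order optimality condition at `Xs` for gradient matrix `G`. -/
def FirstOrderOpt {n : ℕ} (G Xs : Matrix (Fin n) (Fin n) ℝ) : Prop :=
  ∀ X ∈ Feas n, 0 ≤ mip G (X - Xs)

/-- A fixed eigenvalue decomposition `G = P Γ Pᵀ` of a symmetric matrix `G`,
with eigenvalues in descending order, split into the block `Pp, gp` of
positive eigenvalues and the block `Pm, gm` of nonpositive eigenvalues. -/
structure SpecDecomp (n : ℕ) (G : Matrix (Fin n) (Fin n) ℝ) where
  np : ℕ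
  nm : ℕ
  hdim : np + nm = n
  Pp : Matrix (Fin n) (Fin np) ℝ
  Pm : Matrix (Fin n) (Fin nm) ℝ
  gp : Fin np → ℝ
  gm : Fin nm → ℝ
  hgp_pos : ∀ i, 0 < gp i
  hgm_nonpos : ∀ j, gm j ≤ 0
  hgp_anti : ∀ i j : Fin np, i ≤ j → gp j ≤ gp i
  hgm_anti : ∀ i j : Fin nm, i ≤ j → gm j ≤ gm i
  hPp_orth : Ppᵀ * Pp = 1
  hPm_orth : Pmᵀ * Pm = 1
  hPpPm : Ppᵀ * Pm = 0
  hPPT : Pp * Ppᵀ + Pm * Pmᵀ = 1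
  hG : G = Pp * Matrix.diagonal gp * Ppᵀ + Pm * Matrix.diagonal gm * Pmᵀ

namespace SpecDecomp

variable {n : ℕ} {G : Matrix (Fin n) (Fin n) ℝ}

/-- `V₊(X) = P₊ᵀ X P₊`. -/
def Vp (sd : SpecDecomp n G) (X : Matrix (Fin n) (Fin n) ℝ) :
    Matrix (Fin sd.np) (Fin sd.np) ℝ :=
  sd.Ppᵀ * X * sd.Pp

/-- `V₋(X) = P₋ᵀ (I − X) P₋`. -/
def Vm (sd : SpecDecomp n G) (X : Matrix (Fin n) (Fin n) ℝ) :
    Matrix (Fin sd.nm) (Fin sd.nm) ℝ :=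
  sd.Pmᵀ * (1 - X) * sd.Pm

/-- The search direction `D(X) = P M Pᵀ` with blocks
`M₁₁ = V₊^{1/2} Γ₊ V₊^{1/2}`, `M₁₂ = γ_max P₊ᵀ X P₋`,
`M₂₁ = γ_max P₋ᵀ X P₊`, `M₂₂ = V₋^{1/2} Γ₋ V₋^{1/2}`. -/
noncomputable def Dmat (sd : SpecDecomp n G) (X : Matrix (Fin n) (Fin n) ℝ) :
    Matrix (Fin n) (Fin n) ℝ :=
  sd.Pp * (psqrt (sd.Vp X) * Matrix.diagonal sd.gp * psqrt (sd.Vp X)) * sd.Ppᵀ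
    + norm2 G • (sd.Pp * (sd.Ppᵀ * X * sd.Pm) * sd.Pmᵀ)
    + norm2 G • (sd.Pm * (sd.Pmᵀ * X * sd.Pp) * sd.Ppᵀ)
    + sd.Pm * (psqrt (sd.Vm X) * Matrix.diagonal sd.gm * psqrt (sd.Vm X)) * sd.Pmᵀ

/-- `N(X) = ⟨G | D(X)⟩`. -/
noncomputable def Nval (sd : SpecDecomp n G) (X : Matrix (Fin n) (Fin n) ℝ) : ℝ :=
  mip G (sd.Dmat X)

end SpecDecomp

/-! Write `G = P₊Γ₊P₊ᵀ + P₋Γ₋P₋ᵀ`. Then `⟨G|X⟩ = tr Γ₋ + tr(Γ₊V₊(X)) + tr(-Γ₋V₋(X))` for every `X`;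
both traces are nonnegative on `F` and vanish at `P₋P₋ᵀ ∈ F`, so `X*` is first-order optimal iff
`tr(Γ₊V₊(X*)) = tr(Γ₋V₋(X*)) = 0`. The off-diagonal blocks of `D(X*)` are orthogonal to `G`, so
`N(X*) = tr(Γ₊SΓ₊S) + tr(Γ₋TΓ₋T)` with `S = V₊^{1/2}`, `T = V₋^{1/2}`, again a sum of two
nonnegative terms. For a diagonal `Γ ⪰ O` and `S ⪰ O`, both `tr(ΓS²) = 0` and `tr(ΓSΓS) = 0` are
equivalent to `ΓS = O`; for the second this uses that a row of `S` through a zero diagonal entry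
vanishes. -/

lemma _root_.Matrix.PosSemidef.isSymm {k : Type*} {S : Matrix k k ℝ} (hS : S.PosSemidef) :
    S.IsSymm :=
  isHermitian_iff_isSymm.1 hS.1

section WeightedTrace

variable {k : Type*} [Fintype k] [DecidableEq k] {g : k → ℝ} {S V : Matrix k k ℝ}

lemma trace_diagonal_mul (g : k → ℝ) (M : Matrix k k ℝ) :
    (diagonal g * M).trace = ∑ i, g i * M i i := by
  simp [Matrix.trace, diagonal_mul]

lemma trace_diagonal_mul_nonneg (hg : ∀ i, 0 ≤ g i) (hV : V.PosSemidef) :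
    0 ≤ (diagonal g * V).trace := by
  rw [trace_diagonal_mul]
  exact Finset.sum_nonneg fun i _ => mul_nonneg (hg i) hV.diag_nonneg

lemma trace_diagonal_mul_mul_self (g : k → ℝ) (hS : S.IsSymm) :
    (diagonal g * (S * S)).trace = ∑ i, ∑ j, g i * S i j ^ 2 := by
  simp only [trace_diagonal_mul, mul_apply, Finset.mul_sum]
  refine Finset.sum_congr rfl fun i _ => Finset.sum_congr rfl fun j _ => ?_
  rw [hS.apply j i]
  ring

lemma trace_diagonal_mul_conj (g : k → ℝ) (hS : S.IsSymm) :
    (diagonal g * (S * diagonal g * S)).trace = ∑ i, ∑ j, g i * g j * S i j ^ 2 := by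
  simp only [trace_diagonal_mul, mul_apply, diagonal_apply, mul_ite, mul_zero,
    Finset.sum_ite_eq', Finset.mem_univ, if_true, Finset.mul_sum]
  refine Finset.sum_congr rfl fun i _ => Finset.sum_congr rfl fun j _ => ?_
  rw [hS.apply j i]
  ring

lemma diagonal_mul_eq_zero_iff (g : k → ℝ) (S : Matrix k k ℝ) :
    diagonal g * S = 0 ↔ ∀ i j, g i * S i j = 0 := by
  simp [← Matrix.ext_iff, diagonal_mul]

lemma trace_diagonal_mul_mul_self_eq_zero_iff (hg : ∀ i, 0 ≤ g i) (hS : S.IsSymm) :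
    (diagonal g * (S * S)).trace = 0 ↔ diagonal g * S = 0 := by
  have hterm : ∀ i j, 0 ≤ g i * S i j ^ 2 := fun i j => mul_nonneg (hg i) (sq_nonneg _)
  rw [trace_diagonal_mul_mul_self g hS, diagonal_mul_eq_zero_iff,
    Finset.sum_eq_zero_iff_of_nonneg fun i _ => Finset.sum_nonneg fun j _ => hterm i j]
  simp only [Finset.mem_univ, true_implies, Finset.sum_eq_zero_iff_of_nonneg fun j _ => hterm _ j]
  exact forall₂_congr fun i j => by simp

lemma _root_.Matrix.PosSemidef.apply_eq_zero_of_diag_eq_zero (hS : S.PosSemidef) {i : k}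
    (hi : S i i = 0) (j : k) : S i j = 0 := by
  have hcol : S *ᵥ Pi.single i 1 = 0 :=
    (hS.dotProduct_mulVec_zero_iff _).1 (by simp [mulVec_single, hi])
  rw [← hS.isSymm.apply i j]
  simpa [mulVec_single] using congrFun hcol j

lemma trace_diagonal_mul_conj_eq_zero_iff (hg : ∀ i, 0 ≤ g i) (hS : S.PosSemidef) :
    (diagonal g * (S * diagonal g * S)).trace = 0 ↔ diagonal g * S = 0 := by
  refine ⟨fun h => ?_, fun h => by rw [← Matrix.mul_assoc, ← Matrix.mul_assoc, h]; simp⟩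
  have hterm : ∀ i j, 0 ≤ g i * g j * S i j ^ 2 :=
    fun i j => mul_nonneg (mul_nonneg (hg i) (hg j)) (sq_nonneg _)
  rw [trace_diagonal_mul_conj g hS.isSymm,
    Finset.sum_eq_zero_iff_of_nonneg fun i _ => Finset.sum_nonneg fun j _ => hterm i j] at h
  simp only [Finset.mem_univ, true_implies,
    Finset.sum_eq_zero_iff_of_nonneg fun j _ => hterm _ j] at h
  rw [diagonal_mul_eq_zero_iff]
  intro i j
  rcases (hg i).eq_or_lt with hgi | hgi
  · rw [← hgi, zero_mul]
  · have hSii : S i i = 0 := by simpa [hgi.ne'] using h i i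
    rw [hS.apply_eq_zero_of_diag_eq_zero hSii j, mul_zero]

lemma trace_diagonal_mul_conj_nonneg (hg : ∀ i, 0 ≤ g i) (hS : S.IsSymm) :
    0 ≤ (diagonal g * (S * diagonal g * S)).trace := by
  rw [trace_diagonal_mul_conj g hS]
  exact Finset.sum_nonneg fun i _ => Finset.sum_nonneg fun j _ =>
    mul_nonneg (mul_nonneg (hg i) (hg j)) (sq_nonneg _)

section Sqrt

open scoped MatrixOrder

lemma psqrt_eq_cfcSqrt (hV : V.PosSemidef) : psqrt V = CFC.sqrt V := by
  rw [psqrt, dif_pos hV, CFC.sqrt_eq_cfc, cfc_nnreal_eq_real _ V, hV.1.cfc_eq, IsHermitian.cfc,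
    Unitary.conjStarAlgAut_apply]
  congr 3
  ext i
  simp [max_eq_left (hV.eigenvalues_nonneg i)]

lemma psqrt_posSemidef (hV : V.PosSemidef) : (psqrt V).PosSemidef := by
  rw [psqrt_eq_cfcSqrt hV, ← nonneg_iff_posSemidef]
  exact CFC.sqrt_nonneg V

lemma psqrt_mul_self (hV : V.PosSemidef) : psqrt V * psqrt V = V := by
  rw [psqrt_eq_cfcSqrt hV, CFC.sqrt_mul_sqrt_self V hV.nonneg]

end Sqrt

lemma trace_diagonal_mul_eq_zero_iff (hg : ∀ i, 0 ≤ g i) (hV : V.PosSemidef) :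
    (diagonal g * V).trace = 0 ↔ diagonal g * psqrt V = 0 := by
  conv_lhs => rw [← psqrt_mul_self hV]
  exact trace_diagonal_mul_mul_self_eq_zero_iff hg (psqrt_posSemidef hV).isSymm

end WeightedTrace

lemma mip_sub {m : Type*} [Fintype m] (A B C : Matrix m m ℝ) :
    mip A (B - C) = mip A B - mip A C := by
  simp only [mip, Matrix.mul_sub, trace_sub]

namespace SpecDecomp

variable {n : ℕ} {G : Matrix (Fin n) (Fin n) ℝ} (sd : SpecDecomp n G)

lemma transpose_Pm_mul_Pp : sd.Pmᵀ * sd.Pp = 0 := by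
  simpa [transpose_mul] using congrArg transpose sd.hPpPm

@[simp] lemma transpose_Pp_mul_Pp_mul {m : Type*} (M : Matrix (Fin sd.np) m ℝ) :
    sd.Ppᵀ * (sd.Pp * M) = M := by
  rw [← Matrix.mul_assoc, sd.hPp_orth, Matrix.one_mul]

@[simp] lemma transpose_Pm_mul_Pm_mul {m : Type*} (M : Matrix (Fin sd.nm) m ℝ) :
    sd.Pmᵀ * (sd.Pm * M) = M := by
  rw [← Matrix.mul_assoc, sd.hPm_orth, Matrix.one_mul]

@[simp] lemma transpose_Pp_mul_Pm_mul {m : Type*} (M : Matrix (Fin sd.nm) m ℝ) :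
    sd.Ppᵀ * (sd.Pm * M) = 0 := by
  rw [← Matrix.mul_assoc, sd.hPpPm, Matrix.zero_mul]

@[simp] lemma transpose_Pm_mul_Pp_mul {m : Type*} (M : Matrix (Fin sd.np) m ℝ) :
    sd.Pmᵀ * (sd.Pp * M) = 0 := by
  rw [← Matrix.mul_assoc, sd.transpose_Pm_mul_Pp, Matrix.zero_mul]

lemma mip_eq_trace_compress (X : Matrix (Fin n) (Fin n) ℝ) :
    mip G X = (diagonal sd.gp * (sd.Ppᵀ * X * sd.Pp)).trace
      + (diagonal sd.gm * (sd.Pmᵀ * X * sd.Pm)).trace := by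
  have hcompress : ∀ {m : ℕ} (P : Matrix (Fin n) (Fin m) ℝ) (g : Fin m → ℝ),
      ((P * diagonal g * Pᵀ)ᵀ * X).trace = (diagonal g * (Pᵀ * X * P)).trace := by
    intro m P g
    simp only [transpose_mul, transpose_transpose, diagonal_transpose, Matrix.mul_assoc]
    rw [trace_mul_comm]
    simp only [Matrix.mul_assoc]
  rw [mip]
  conv_lhs => rw [sd.hG]
  rw [transpose_add, Matrix.add_mul, trace_add, hcompress, hcompress]

lemma Vp_posSemidef {X : Matrix (Fin n) (Fin n) ℝ} (hX : X.PosSemidef) :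
    (sd.Vp X).PosSemidef := by
  simpa [Vp] using hX.conjTranspose_mul_mul_same sd.Pp

lemma Vm_posSemidef {X : Matrix (Fin n) (Fin n) ℝ} (hX : (1 - X).PosSemidef) :
    (sd.Vm X).PosSemidef := by
  simpa [Vm] using hX.conjTranspose_mul_mul_same sd.Pm

lemma mip_eq_sum_add (X : Matrix (Fin n) (Fin n) ℝ) :
    mip G X = ∑ i, sd.gm i
      + ((diagonal sd.gp * sd.Vp X).trace + (diagonal (-sd.gm) * sd.Vm X).trace) := by
  have hPm : sd.Pmᵀ * X * sd.Pm = 1 - sd.Vm X := by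
    rw [Vm, Matrix.mul_sub, Matrix.sub_mul, Matrix.mul_one, sd.hPm_orth, sub_sub_cancel]
  have hneg : diagonal (-sd.gm) = -diagonal sd.gm := (diagonal_neg _).symm
  rw [mip_eq_trace_compress, hPm, Matrix.mul_sub, Matrix.mul_one, trace_sub, trace_diagonal,
    hneg, Matrix.neg_mul, trace_neg, Vp]
  ring

lemma Pm_mul_transpose_mem_feas : sd.Pm * sd.Pmᵀ ∈ Feas n := by
  refine ⟨by simpa using posSemidef_self_mul_conjTranspose sd.Pm, ?_⟩
  rw [← sd.hPPT, add_sub_cancel_right]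
  simpa using posSemidef_self_mul_conjTranspose sd.Pp

lemma Vp_Pm_mul_transpose : sd.Vp (sd.Pm * sd.Pmᵀ) = 0 := by
  simp [Vp]

lemma Vm_Pm_mul_transpose : sd.Vm (sd.Pm * sd.Pmᵀ) = 0 := by
  rw [Vm, ← sd.hPPT, add_sub_cancel_right]
  simp

lemma transpose_Pp_mul_Dmat_mul_Pp (X : Matrix (Fin n) (Fin n) ℝ) :
    sd.Ppᵀ * sd.Dmat X * sd.Pp = psqrt (sd.Vp X) * diagonal sd.gp * psqrt (sd.Vp X) := by
  simp [Dmat, Matrix.mul_add, Matrix.add_mul, Matrix.mul_assoc, sd.hPp_orth,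
    sd.transpose_Pm_mul_Pp]

lemma transpose_Pm_mul_Dmat_mul_Pm (X : Matrix (Fin n) (Fin n) ℝ) :
    sd.Pmᵀ * sd.Dmat X * sd.Pm = psqrt (sd.Vm X) * diagonal sd.gm * psqrt (sd.Vm X) := by
  simp [Dmat, Matrix.mul_add, Matrix.add_mul, Matrix.mul_assoc, sd.hPm_orth, sd.hPpPm]

lemma Nval_eq_trace_add (X : Matrix (Fin n) (Fin n) ℝ) :
    sd.Nval X = (diagonal sd.gp * (psqrt (sd.Vp X) * diagonal sd.gp * psqrt (sd.Vp X))).trace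
      + (diagonal (-sd.gm) * (psqrt (sd.Vm X) * diagonal (-sd.gm) * psqrt (sd.Vm X))).trace := by
  have hneg : diagonal (-sd.gm) = -diagonal sd.gm := (diagonal_neg _).symm
  rw [Nval, mip_eq_trace_compress, transpose_Pp_mul_Dmat_mul_Pp, transpose_Pm_mul_Dmat_mul_Pm,
    hneg]
  simp only [Matrix.mul_neg, Matrix.neg_mul, neg_neg]

lemma firstOrderOpt_iff_trace_eq_zero {X : Matrix (Fin n) (Fin n) ℝ} (hX : X ∈ Feas n) :
    FirstOrderOpt G X ↔
      (diagonal sd.gp * sd.Vp X).trace = 0 ∧ (diagonal (-sd.gm) * sd.Vm X).trace = 0 := by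
  have hgap : ∀ Y ∈ Feas n,
      0 ≤ (diagonal sd.gp * sd.Vp Y).trace ∧ 0 ≤ (diagonal (-sd.gm) * sd.Vm Y).trace :=
    fun Y hY => ⟨trace_diagonal_mul_nonneg (fun i => (sd.hgp_pos i).le) (sd.Vp_posSemidef hY.1),
      trace_diagonal_mul_nonneg (fun i => neg_nonneg.2 (sd.hgm_nonpos i)) (sd.Vm_posSemidef hY.2)⟩
  obtain ⟨hp, hm⟩ := hgap X hX
  constructor
  · intro hopt
    have hmin := hopt _ sd.Pm_mul_transpose_mem_feas
    rw [mip_sub, sd.mip_eq_sum_add, sd.mip_eq_sum_add, Vp_Pm_mul_transpose, Vm_Pm_mul_transpose,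
      Matrix.mul_zero, Matrix.mul_zero, trace_zero, trace_zero] at hmin
    constructor <;> linarith
  · rintro ⟨hp0, hm0⟩ Y hY
    rw [mip_sub, sd.mip_eq_sum_add, sd.mip_eq_sum_add, hp0, hm0]
    linarith [hgap Y hY]

lemma Nval_eq_zero_iff_trace_eq_zero {X : Matrix (Fin n) (Fin n) ℝ} (hX : X ∈ Feas n) :
    sd.Nval X = 0 ↔
      (diagonal sd.gp * sd.Vp X).trace = 0 ∧ (diagonal (-sd.gm) * sd.Vm X).trace = 0 := by
  have hgp : ∀ i, 0 ≤ sd.gp i := fun i => (sd.hgp_pos i).le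
  have hgm : ∀ i, 0 ≤ (-sd.gm) i := fun i => neg_nonneg.2 (sd.hgm_nonpos i)
  have hSp := psqrt_posSemidef (sd.Vp_posSemidef hX.1)
  have hSm := psqrt_posSemidef (sd.Vm_posSemidef hX.2)
  rw [Nval_eq_trace_add, add_eq_zero_iff_of_nonneg
      (trace_diagonal_mul_conj_nonneg hgp hSp.isSymm)
      (trace_diagonal_mul_conj_nonneg hgm hSm.isSymm),
    trace_diagonal_mul_conj_eq_zero_iff hgp hSp, trace_diagonal_mul_conj_eq_zero_iff hgm hSm,
    trace_diagonal_mul_eq_zero_iff hgp (sd.Vp_posSemidef hX.1),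
    trace_diagonal_mul_eq_zero_iff hgm (sd.Vm_posSemidef hX.2)]

end SpecDecomp

theorem first_order_iff_Nval_eq_zero_general {n : ℕ}
    (grad : Matrix (Fin n) (Fin n) ℝ → Matrix (Fin n) (Fin n) ℝ)
    (Xs : Matrix (Fin n) (Fin n) ℝ) (hXs : Xs ∈ Feas n)
    (sd : SpecDecomp n (grad Xs)) :
    FirstOrderOpt (grad Xs) Xs ↔ sd.Nval Xs = 0 :=
  (sd.firstOrderOpt_iff_trace_eq_zero hXs).trans (sd.Nval_eq_zero_iff_trace_eq_zero hXs).symm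

theorem first_order_iff_Nval_eq_zero {n : ℕ}
    (f : Matrix (Fin n) (Fin n) ℝ → ℝ)
    (grad : Matrix (Fin n) (Fin n) ℝ → Matrix (Fin n) (Fin n) ℝ)
    (hgradsym : ∀ X ∈ Feas n, (grad X).IsSymm)
    (hgrad : ∀ X ∈ Feas n, HasFDerivAt f (gradCLM (grad X)) X)
    (Xs : Matrix (Fin n) (Fin n) ℝ) (hXs : Xs ∈ Feas n)
    (sd : SpecDecomp n (grad Xs)) :
    FirstOrderOpt (grad Xs) Xs ↔ sd.Nval Xs = 0 :=
  first_order_iff_Nval_eq_zero_general grad Xs hXs sd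

end BoxSDP
end

section
/- Let Xᵏ ∈ F with N(Xᵏ) > 0, let Δₖ > 0, and let αₖ be a minimizer of q(α, Xᵏ) over 0 ≤ α ≤ min{‖D(Xᵏ)‖_F / γ_max(Xᵏ), Δₖ}. Then q(αₖ, Xᵏ) ≤ f(Xᵏ) − (1/2) · min{ N(Xᵏ)² / (M₂ ‖D(Xᵏ)‖_F²), N(Xᵏ)/γ_max(Xᵏ), Δₖ N(Xᵏ)/‖D(Xᵏ)‖_F }. -/
set_option autoImplicit false

open Matrix Set Filter

attribute [local instance] Matrix.normedAddCommGroup Matrix.normedSpace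

namespace BoxSDP

open scoped Classical

/-! Along the unit direction `S = D / ‖D‖_F` the model `q` is a one-dimensional quadratic
`f - a g + a² h / 2` with `g = N / ‖D‖_F` and curvature `h ≤ M₂`. Minimising it over `[0, T]` is
the Cauchy-point computation of trust-region methods: either the unconstrained minimiser `g / h`
is admissible and the decrease is at least `g² / (2 M₂)`, or `T h < g` and the endpoint `T`
already decreases the model by `T g / 2`. -/

theorem le_sub_half_min_of_forall_le_quadratic {v c g h M T : ℝ} (hT : 0 ≤ T) (hhM : h ≤ M)
    (hv : ∀ a ∈ Icc 0 T, v ≤ c - a * g + a ^ 2 / 2 * h) :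
    v ≤ c - 1 / 2 * min (g ^ 2 / M) (T * g) := by
  have hv0 : v ≤ c := by simpa using hv 0 ⟨le_rfl, hT⟩
  rcases le_or_gt (min (g ^ 2 / M) (T * g)) 0 with hm | hm
  · linarith
  have hg : 0 < g := pos_of_mul_pos_right (lt_min_iff.mp hm).2 hT
  rcases le_or_gt (T * h) g with hTh | hTh
  · have hvT := hv T ⟨hT, le_rfl⟩
    have : T ^ 2 * h ≤ T * g := by nlinarith
    linarith [min_le_right (g ^ 2 / M) (T * g)]
  · have hh : 0 < h := by
      by_contra! hh
      nlinarith
    have hvgh := hv (g / h) ⟨by positivity, ((div_lt_iff₀ hh).mpr (by linarith)).le⟩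
    have hval : c - g / h * g + (g / h) ^ 2 / 2 * h = c - 1 / 2 * (g ^ 2 / h) := by
      field_simp
      ring
    have : g ^ 2 / M ≤ g ^ 2 / h := div_le_div_of_nonneg_left (sq_nonneg g) hh hhM
    linarith [min_le_left (g ^ 2 / M) (T * g)]

section Frobenius

variable {m k : Type*} [Fintype m] [Fintype k]

lemma mip_self_nonneg (A : Matrix m k ℝ) : 0 ≤ mip A A := by
  simpa [mip, conjTranspose_eq_transpose_of_trivial] using
    (posSemidef_conjTranspose_mul_self A).trace_nonneg

lemma mip_self_eq_zero_iff {A : Matrix m k ℝ} : mip A A = 0 ↔ A = 0 := by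
  simpa [mip, conjTranspose_eq_transpose_of_trivial] using
    trace_conjTranspose_mul_self_eq_zero_iff (A := A)

lemma fnorm_sq (A : Matrix m k ℝ) : fnorm A ^ 2 = mip A A :=
  Real.sq_sqrt (mip_self_nonneg A)

lemma fnorm_pos {A : Matrix m k ℝ} (hA : A ≠ 0) : 0 < fnorm A :=
  Real.sqrt_pos.mpr ((mip_self_nonneg A).lt_of_ne' (mip_self_eq_zero_iff.not.mpr hA))

lemma mip_smul_right (A B : Matrix m k ℝ) (c : ℝ) : mip A (c • B) = c * mip A B := by
  simp [mip]

lemma mip_inv_fnorm_smul (A B : Matrix m k ℝ) :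
    mip A ((fnorm B)⁻¹ • B) = mip A B / fnorm B := by
  rw [mip_smul_right, inv_mul_eq_div]

end Frobenius

lemma hform_smul_smul {n : ℕ} (H : Matrix (Fin n) (Fin n) ℝ →L[ℝ] Matrix (Fin n) (Fin n) ℝ)
    (c : ℝ) (A : Matrix (Fin n) (Fin n) ℝ) :
    hform H (c • A) (c • A) = c ^ 2 * hform H A A := by
  simp [hform, mip, sq, mul_assoc]

lemma hform_inv_fnorm_smul {n : ℕ}
    (H : Matrix (Fin n) (Fin n) ℝ →L[ℝ] Matrix (Fin n) (Fin n) ℝ) (A : Matrix (Fin n) (Fin n) ℝ) :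
    hform H ((fnorm A)⁻¹ • A) ((fnorm A)⁻¹ • A) = hform H A A / mip A A := by
  rw [hform_smul_smul, inv_pow, fnorm_sq, inv_mul_eq_div]

lemma transpose_psqrt {m : Type*} [Fintype m] [DecidableEq m] (A : Matrix m m ℝ) :
    (psqrt A)ᵀ = psqrt A := by
  unfold psqrt
  split_ifs
  · rw [← conjTranspose_eq_transpose_of_trivial]
    simp [Matrix.star_eq_conjTranspose, Matrix.mul_assoc]
  · simp

lemma SpecDecomp.isSymm_Dmat {n : ℕ} {G : Matrix (Fin n) (Fin n) ℝ} (sd : SpecDecomp n G)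
    {X : Matrix (Fin n) (Fin n) ℝ} (hX : X.IsSymm) : (sd.Dmat X).IsSymm := by
  rw [IsSymm] at hX ⊢
  unfold SpecDecomp.Dmat SpecDecomp.Vp SpecDecomp.Vm
  simp only [Matrix.transpose_add, Matrix.transpose_smul, Matrix.transpose_mul,
    Matrix.transpose_transpose, Matrix.diagonal_transpose, hX, transpose_psqrt,
    Matrix.mul_assoc]
  abel

lemma hform_inv_fnorm_smul_le {n : ℕ}
    {hessOp : Matrix (Fin n) (Fin n) ℝ → Matrix (Fin n) (Fin n) ℝ →L[ℝ] Matrix (Fin n) (Fin n) ℝ}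
    {M₂ : ℝ}
    (hM2 : IsGreatest {r : ℝ | ∃ X ∈ Feas n, ∃ D : Matrix (Fin n) (Fin n) ℝ,
      D.IsSymm ∧ D ≠ 0 ∧ r = |hform (hessOp X) D D| / mip D D} M₂)
    {X D : Matrix (Fin n) (Fin n) ℝ} (hX : X ∈ Feas n) (hD : D.IsSymm) (hD0 : D ≠ 0) :
    hform (hessOp X) ((fnorm D)⁻¹ • D) ((fnorm D)⁻¹ • D) ≤ M₂ := by
  rw [hform_inv_fnorm_smul]
  exact (div_le_div_of_nonneg_right (le_abs_self _) (mip_self_nonneg D)).trans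
    (hM2.2 ⟨X, hX, D, hD, hD0, rfl⟩)

theorem q_decrease_bound_general {n : ℕ}
    (f : Matrix (Fin n) (Fin n) ℝ → ℝ)
    (grad : Matrix (Fin n) (Fin n) ℝ → Matrix (Fin n) (Fin n) ℝ)
    (hessOp : Matrix (Fin n) (Fin n) ℝ →
      Matrix (Fin n) (Fin n) ℝ →L[ℝ] Matrix (Fin n) (Fin n) ℝ)
    (M₂ : ℝ)
    (hM2 : IsGreatest {r : ℝ | ∃ X ∈ Feas n, ∃ D : Matrix (Fin n) (Fin n) ℝ,
      D.IsSymm ∧ D ≠ 0 ∧ r = |hform (hessOp X) D D| / mip D D} M₂)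
    (Xk : Matrix (Fin n) (Fin n) ℝ) (hXk : Xk ∈ Feas n)
    (sd : SpecDecomp n (grad Xk))
    (hN : 0 < sd.Nval Xk)
    (Δk : ℝ)
    (S : Matrix (Fin n) (Fin n) ℝ)
    (hS : S = (fnorm (sd.Dmat Xk))⁻¹ • sd.Dmat Xk)
    (q : ℝ → ℝ)
    (hq : ∀ a : ℝ, q a = f Xk - a * mip (grad Xk) S
        + a ^ 2 / 2 * hform (hessOp Xk) S S)
    (αk : ℝ)
    (hαmem : αk ∈ Set.Icc 0 (min (fnorm (sd.Dmat Xk) / norm2 (grad Xk)) Δk))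
    (hαmin : ∀ a ∈ Set.Icc 0 (min (fnorm (sd.Dmat Xk) / norm2 (grad Xk)) Δk),
      q αk ≤ q a) :
    q αk ≤ f Xk - (1 / 2) * min (min
        (sd.Nval Xk ^ 2 / (M₂ * fnorm (sd.Dmat Xk) ^ 2))
        (sd.Nval Xk / norm2 (grad Xk)))
        (Δk * sd.Nval Xk / fnorm (sd.Dmat Xk)) := by
  set D := sd.Dmat Xk
  set N := sd.Nval Xk
  set T := min (fnorm D / norm2 (grad Xk)) Δk
  have hD0 : D ≠ 0 := by
    rintro hD
    simp [N, SpecDecomp.Nval, D, hD, mip] at hN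
  have hd := fnorm_pos hD0
  have hslope : mip (grad Xk) S = N / fnorm D := by rw [hS, mip_inv_fnorm_smul]; rfl
  have hcurv : hform (hessOp Xk) S S ≤ M₂ :=
    hS ▸ hform_inv_fnorm_smul_le hM2 hXk (sd.isSymm_Dmat hXk.1.1) hD0
  have hmin : min (min (N ^ 2 / (M₂ * fnorm D ^ 2)) (N / norm2 (grad Xk))) (Δk * N / fnorm D)
      = min ((N / fnorm D) ^ 2 / M₂) (T * (N / fnorm D)) := by
    rw [min_assoc, min_mul_of_nonneg _ _ (by positivity)]
    congr 1
    · field_simp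
    · congr 1 <;> field_simp
  rw [hmin]
  refine le_sub_half_min_of_forall_le_quadratic (hαmem.1.trans hαmem.2) hcurv fun a ha => ?_
  rw [← hslope, ← hq]
  exact hαmin a ha

theorem q_decrease_bound {n : ℕ}
    (f : Matrix (Fin n) (Fin n) ℝ → ℝ)
    (grad : Matrix (Fin n) (Fin n) ℝ → Matrix (Fin n) (Fin n) ℝ)
    (hgradsym : ∀ X ∈ Feas n, (grad X).IsSymm)
    (hgrad : ∀ X ∈ Feas n, HasFDerivAt f (gradCLM (grad X)) X)
    (hessOp : Matrix (Fin n) (Fin n) ℝ →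
      Matrix (Fin n) (Fin n) ℝ →L[ℝ] Matrix (Fin n) (Fin n) ℝ)
    (hhess : ∀ X ∈ Feas n, HasFDerivAt grad (hessOp X) X)
    (M₂ : ℝ)
    (hM2 : IsGreatest {r : ℝ | ∃ X ∈ Feas n, ∃ D : Matrix (Fin n) (Fin n) ℝ,
      D.IsSymm ∧ D ≠ 0 ∧ r = |hform (hessOp X) D D| / mip D D} M₂)
    (hM2pos : 0 < M₂)
    (Xk : Matrix (Fin n) (Fin n) ℝ) (hXk : Xk ∈ Feas n)
    (sd : SpecDecomp n (grad Xk))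
    (hN : 0 < sd.Nval Xk)
    (Δk : ℝ) (hΔk : 0 < Δk)
    (S : Matrix (Fin n) (Fin n) ℝ)
    (hS : S = (fnorm (sd.Dmat Xk))⁻¹ • sd.Dmat Xk)
    (q : ℝ → ℝ)
    (hq : ∀ a : ℝ, q a = f Xk - a * mip (grad Xk) S
        + a ^ 2 / 2 * hform (hessOp Xk) S S)
    (αk : ℝ)
    (hαmem : αk ∈ Set.Icc 0 (min (fnorm (sd.Dmat Xk) / norm2 (grad Xk)) Δk))
    (hαmin : ∀ a ∈ Set.Icc 0 (min (fnorm (sd.Dmat Xk) / norm2 (grad Xk)) Δk),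
      q αk ≤ q a) :
    q αk ≤ f Xk - (1 / 2) * min (min
        (sd.Nval Xk ^ 2 / (M₂ * fnorm (sd.Dmat Xk) ^ 2))
        (sd.Nval Xk / norm2 (grad Xk)))
        (Δk * sd.Nval Xk / fnorm (sd.Dmat Xk)) :=
  q_decrease_bound_general f grad hessOp M₂ hM2 Xk hXk sd hN Δk S hS q hq αk hαmem hαmin

end BoxSDP
end
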